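/- If H is infinite-dimensional, then the cone of sums of squares equals the set of single hermitian squares: C_d = {r^* r : r ∈ A_d}. -/

import Mathlib

open ContinuousLinearMap

/-- Words of length at most `D` in the free monoid on `g` letters. -/
abbrev Word (g D : ℕ) := {l : List (Fin g) // l.length ≤ D}

noncomputable instance wordFintype (g D : ℕ) : Fintype (Word g D) :=
  haveI : Finite (Word g D) := (List.finite_length_le (Fin g) D).to_subtype
  Fintype.ofFinite _

/-- Membership in the cone `C_d`: the polynomial of degree `≤ 2d` with coefficients `P`
is a sum of `N(d)` hermitian squares `∑_{i=1}^{N(d)} r_i^* r_i` with `r_i` of degree `≤ d`. -/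
def IsSOS (g d : ℕ) (H : Type*) [NormedAddCommGroup H] [InnerProductSpace ℂ H]
    [CompleteSpace H] (P : Word g (2 * d) → (H →L[ℂ] H)) : Prop :=
  ∃ R : Fin (Fintype.card (Word g d)) → (Word g d → (H →L[ℂ] H)),
    ∀ u : Word g (2 * d), P u =
      ∑ i : Fin (Fintype.card (Word g d)), ∑ v : Word g d, ∑ w : Word g d,
        if v.1.reverse ++ w.1 = u.1 then
          (ContinuousLinearMap.adjoint (R i v)) ∘L (R i w) else 0

/-! In an infinite-dimensional Hilbert space `H` there are isometries `V₁, …, V_N` of `H` with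
pairwise orthogonal ranges: embed `N` disjoint copies of the index set of a Hilbert basis into
itself. Then `r = ∑ᵢ Vᵢ rᵢ` satisfies `r^* r = ∑ᵢ rᵢ^* rᵢ`, so every sum of `N` hermitian squares is
a single hermitian square; conversely a single square is a sum of squares padded with zeros. -/

open scoped lp InnerProductSpace

theorem Infinite.exists_injective_prod (ι α : Type*) [Finite ι] [Infinite α] :
    ∃ e : ι × α → α, Function.Injective e := by
  suffices h : Nonempty (ι × α ↪ α) from h.elim fun e => ⟨e, e.injective⟩
  rw [← Cardinal.lift_mk_le', Cardinal.mk_prod, Cardinal.lift_mul, Cardinal.lift_lift,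
    Cardinal.lift_lift]
  have hα : Cardinal.aleph0 ≤ Cardinal.lift (Cardinal.mk α) := by simp
  exact Cardinal.mul_le_of_le hα
    ((Cardinal.lift_le_aleph0.2 (Cardinal.lt_aleph0_of_finite ι).le).trans hα) le_rfl

section

variable {𝕜 E : Type*} [RCLike 𝕜] [NormedAddCommGroup E] [InnerProductSpace 𝕜 E]

theorem HilbertBasis.infinite_of_not_finiteDimensional [CompleteSpace E] {ι : Type*}
    (b : HilbertBasis ι 𝕜 E) (h : ¬ FiniteDimensional 𝕜 E) : Infinite ι := by
  by_contra hι
  have : Finite ι := not_infinite_iff_finite.1 hι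
  have : Fintype ι := Fintype.ofFinite ι
  exact h b.toOrthonormalBasis.toBasis.finiteDimensional_of_finite

theorem inner_eq_zero_of_hasSum {α : Type*} {f : α → E} {x y : E} (hx : HasSum f x)
    (hy : ∀ a, ⟪y, f a⟫_𝕜 = 0) : ⟪y, x⟫_𝕜 = 0 :=
  (hx.mapL (innerSL 𝕜 y)).unique (by simpa only [innerSL_apply_apply, hy] using hasSum_zero)

/-- The isometry `ℓ²(α) → E` sending the `a`-th unit vector to `v (i, a)`. -/
noncomputable def Orthonormal.sliceIsometry [CompleteSpace E] {ι α : Type*} {v : ι × α → E}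
    (hv : Orthonormal 𝕜 v) (i : ι) : ℓ²(α, 𝕜) →ₗᵢ[𝕜] E :=
  (hv.comp _ (Prod.mk_right_injective i)).orthogonalFamily.linearIsometry

theorem Orthonormal.hasSum_sliceIsometry [CompleteSpace E] {ι α : Type*} {v : ι × α → E}
    (hv : Orthonormal 𝕜 v) (i : ι) (f : ℓ²(α, 𝕜)) :
    HasSum (fun a => f a • v (i, a)) (hv.sliceIsometry i f) :=
  (hv.comp _ (Prod.mk_right_injective i)).orthogonalFamily.hasSum_linearIsometry f

theorem Orthonormal.orthogonalFamily_sliceIsometry [CompleteSpace E] {ι α : Type*}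
    {v : ι × α → E} (hv : Orthonormal 𝕜 v) :
    OrthogonalFamily 𝕜 (fun _ : ι => ℓ²(α, 𝕜)) hv.sliceIsometry := by
  intro i j hij f g
  refine inner_eq_zero_of_hasSum (hv.hasSum_sliceIsometry j g) fun b => ?_
  rw [inner_smul_right, inner_eq_zero_symm.1, mul_zero]
  refine inner_eq_zero_of_hasSum (hv.hasSum_sliceIsometry i f) fun a => ?_
  rw [inner_smul_right, hv.2 (by simp [Prod.ext_iff, Ne.symm hij] : (j, b) ≠ (i, a)), mul_zero]

theorem exists_orthogonalFamily_linearIsometry [CompleteSpace E] (ι : Type*) [Finite ι]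
    (h : ¬ FiniteDimensional 𝕜 E) :
    ∃ V : ι → (E →ₗᵢ[𝕜] E), OrthogonalFamily 𝕜 (fun _ => E) V := by
  obtain ⟨w, b, -⟩ := exists_hilbertBasis 𝕜 E
  have := b.infinite_of_not_finiteDimensional h
  obtain ⟨e, he⟩ := Infinite.exists_injective_prod ι w
  have hv : Orthonormal 𝕜 (b ∘ e) := b.orthonormal.comp e he
  exact ⟨fun i => (hv.sliceIsometry i).comp b.repr.toLinearIsometry,
    fun i j hij x y => hv.orthogonalFamily_sliceIsometry hij (b.repr x) (b.repr y)⟩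

theorem OrthogonalFamily.adjoint_sum_comp_sum [CompleteSpace E] {F : Type*}
    [NormedAddCommGroup F] [InnerProductSpace 𝕜 F] [CompleteSpace F] {ι : Type*} [Fintype ι]
    {V : ι → (E →ₗᵢ[𝕜] E)} (hV : OrthogonalFamily 𝕜 (fun _ => E) V) (A B : ι → (F →L[𝕜] E)) :
    adjoint (∑ i, (V i).toContinuousLinearMap ∘L A i) ∘L
        (∑ i, (V i).toContinuousLinearMap ∘L B i) =
      ∑ i, adjoint (A i) ∘L B i := by
  ext x
  refine ext_inner_left 𝕜 fun y => ?_
  simp only [comp_apply, adjoint_inner_right, sum_apply, LinearIsometry.coe_toContinuousLinearMap,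
    hV.inner_sum, _root_.inner_sum]

end

section

variable {𝕜 E F : Type*} [RCLike 𝕜] [NormedAddCommGroup E] [InnerProductSpace 𝕜 E]
  [CompleteSpace E] [NormedAddCommGroup F] [InnerProductSpace 𝕜 F] [CompleteSpace F] {g D D' : ℕ}

/-- The coefficient of the word `u` in `r^* r` for `r = ∑_v r_v v`; the letters are self-adjoint,
so `v^* = v.reverse`. -/
noncomputable def hermSqCoeff (r : Word g D → (F →L[𝕜] E)) (u : Word g D') : F →L[𝕜] F :=
  ∑ v, ∑ w, if v.1.reverse ++ w.1 = u.1 then adjoint (r v) ∘L r w else 0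

@[simp]
theorem hermSqCoeff_zero (u : Word g D') : hermSqCoeff (0 : Word g D → (F →L[𝕜] E)) u = 0 := by
  simp [hermSqCoeff]

theorem sum_hermSqCoeff_single {ι : Type*} [Fintype ι] [DecidableEq ι] (i₀ : ι)
    (r : Word g D → (F →L[𝕜] E)) (u : Word g D') :
    ∑ i, hermSqCoeff ((Pi.single i₀ r : ι → _) i) u = hermSqCoeff r u := by
  rw [Fintype.sum_eq_single i₀ fun i hi => by rw [Pi.single_eq_of_ne hi, hermSqCoeff_zero],
    Pi.single_eq_same]

theorem OrthogonalFamily.hermSqCoeff_sum_comp {ι : Type*} [Fintype ι]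
    {V : ι → (E →ₗᵢ[𝕜] E)} (hV : OrthogonalFamily 𝕜 (fun _ => E) V)
    (R : ι → Word g D → (F →L[𝕜] E)) (u : Word g D') :
    hermSqCoeff (fun v => ∑ i, (V i).toContinuousLinearMap ∘L R i v) u =
      ∑ i, hermSqCoeff (R i) u := by
  simp only [hermSqCoeff, hV.adjoint_sum_comp_sum, Finset.ite_sum_zero]
  exact (Finset.sum_congr rfl fun _ _ => Finset.sum_comm).trans Finset.sum_comm

end

/-- If `H` is infinite-dimensional, then the cone of sums of squares equals the set of
single hermitian squares: `C_d = {r^* r : r ∈ A_d}`. -/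
theorem stmt_11 (g d : ℕ) (H : Type*) [NormedAddCommGroup H] [InnerProductSpace ℂ H]
    [CompleteSpace H] (hinf : ¬ FiniteDimensional ℂ H)
    (P : Word g (2 * d) → (H →L[ℂ] H)) :
    IsSOS g d H P ↔
      ∃ r : Word g d → (H →L[ℂ] H),
        ∀ u : Word g (2 * d), P u =
          ∑ v : Word g d, ∑ w : Word g d,
            if v.1.reverse ++ w.1 = u.1 then
              (ContinuousLinearMap.adjoint (r v)) ∘L (r w) else 0 := by
  constructor
  · rintro ⟨R, hR⟩
    obtain ⟨V, hV⟩ := exists_orthogonalFamily_linearIsometry (𝕜 := ℂ) (E := H)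
      (Fin (Fintype.card (Word g d))) hinf
    exact ⟨fun v => ∑ i, (V i).toContinuousLinearMap ∘L R i v,
      fun u => (hR u).trans (hV.hermSqCoeff_sum_comp R u).symm⟩
  · rintro ⟨r, hr⟩
    have : Nonempty (Word g d) := ⟨⟨[], Nat.zero_le d⟩⟩
    have : NeZero (Fintype.card (Word g d)) := ⟨Fintype.card_ne_zero⟩
    exact ⟨Pi.single 0 r, fun u => (hr u).trans (sum_hermSqCoeff_single 0 r u).symm⟩
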